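/- Let 0 < α < 1 and let u : ℝ → ℝ be a C² 2π-periodic function with amplitude V = max u − min u. Then there is a constant c₂ > 0 depending only on α such that for every B > 0 and every x ∈ ℝ: D_α u'(x) = ∫_ℝ |u'(x) − u'(x+z)|² |z|^{−(1+α)} dz ≥ B |u'(x)|² − c₂ B^{(2+α)/α} V². -/

import Mathlib

open Real MeasureTheory

/-- Commutator (alignment) forcing `T(ρ,u)(x) = ∫ ρ(x+z)(u(x+z)-u(x))|z|^{-(1+α)} dz`. -/
noncomputable def commT (α : ℝ) (ρ u : ℝ → ℝ) (x : ℝ) : ℝ :=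
  ∫ z : ℝ, ρ (x + z) * (u (x + z) - u x) / |z| ^ (1 + α)

/-- Fractional Laplacian `Λ^α f(x) = ∫ (f(x) - f(x+z))|z|^{-(1+α)} dz`. -/
noncomputable def fracLap (α : ℝ) (f : ℝ → ℝ) (x : ℝ) : ℝ :=
  ∫ z : ℝ, (f x - f (x + z)) / |z| ^ (1 + α)

/-- Dissipation functional `D_α g(x) = ∫ |g(x) - g(x+z)|² |z|^{-(1+α)} dz`. -/
noncomputable def dissip (α : ℝ) (g : ℝ → ℝ) (x : ℝ) : ℝ :=
  ∫ z : ℝ, (g x - g (x + z)) ^ 2 / |z| ^ (1 + α)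

/-- The fractional Euler alignment system holds at the point `(x,t)`:
`ρ_t + (ρu)_x = 0` and `u_t + u u_x = T(ρ,u)`. -/
def IsEulerAlignSol (α : ℝ) (ρ u : ℝ → ℝ → ℝ) (x t : ℝ) : Prop :=
  deriv (fun s => ρ x s) t + deriv (fun y => ρ y t * u y t) x = 0 ∧
  deriv (fun s => u x s) t + u x t * deriv (fun y => u y t) x
    = commT α (fun y => ρ y t) (fun y => u y t) x

/-! Restricting the dissipation integral to the window `z ∈ [r, 2r]`, where
`|z|^{1+α} ≤ (2r)^{1+α}`, and expanding the square gives
`D_α u'(x) ≥ (r u'(x)² - 2 u'(x) (u(x+2r) - u(x+r))) / (2r)^{1+α}`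
`        ≥ (r u'(x)² - 2 |u'(x)| V) / (2r)^{1+α}`.
Taking `1/(2r) = (4B)^{1/α}` turns the right-hand side into
`2B u'(x)² - 8B (4B)^{1/α} |u'(x)| V`, and AM-GM on the cross term gives the bound with
`c₂ = 16 · 4^{2/α}`. Periodicity makes `u'` bounded and Lipschitz, so the integral defining
`D_α u'(x)` converges and is not Lean's junk value `0`. -/

open scoped NNReal

namespace Function

variable {E : Type*} [NormedAddCommGroup E] [NormedSpace ℝ E]

theorem Periodic.deriv {f : ℝ → E} {c : ℝ} (hp : Periodic f c) : Periodic (deriv f) c := fun x => by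
  rw [← deriv_comp_add_const, hp.funext]

theorem Periodic.exists_lipschitzWith {f : ℝ → E} {c : ℝ} (hp : Periodic f c) (hc : c ≠ 0)
    (hf : ContDiff ℝ 1 f) :
    ∃ K, LipschitzWith K f := by
  obtain ⟨C, hC⟩ := isBounded_iff_forall_norm_le.1
    (hp.deriv.isBounded_of_continuous hc (hf.continuous_deriv le_rfl))
  refine ⟨C.toNNReal, lipschitzWith_of_nnnorm_deriv_le (hf.differentiable one_ne_zero) fun x => ?_⟩
  rw [← NNReal.coe_le_coe, coe_nnnorm]
  exact (hC _ ⟨x, rfl⟩).trans (Real.le_coe_toNNReal C)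

theorem Periodic.abs_sub_le_sSup_sub_sInf {f : ℝ → ℝ} {c : ℝ} (hp : Periodic f c) (hc : c ≠ 0)
    (hf : Continuous f) (a b : ℝ) : |f b - f a| ≤ sSup (Set.range f) - sInf (Set.range f) := by
  rw [← Real.diam_eq (hp.isBounded_of_continuous hc hf), ← Real.dist_eq]
  exact Metric.dist_le_diam_of_mem (hp.isBounded_of_continuous hc hf) ⟨b, rfl⟩ ⟨a, rfl⟩

end Function

theorem min_sq_one_div_rpow_le {α : ℝ} (hα₀ : -1 ≤ α) (hα₁ : α ≤ 1) (z : ℝ) :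
    min (z ^ 2) 1 / |z| ^ (1 + α) ≤ (2 / (1 + |z|)) ^ (1 + α) := by
  rcases le_total |z| 1 with hz | hz
  · have hsq : z ^ 2 / |z| ^ (1 + α) ≤ 1 := by
      rcases eq_or_ne z 0 with rfl | hz0
      · simp
      have hpos : 0 < |z| := abs_pos.2 hz0
      rw [← sq_abs, ← rpow_two, div_le_one (rpow_pos_of_pos hpos _)]
      exact rpow_le_rpow_of_exponent_ge hpos hz (by linarith)
    calc min (z ^ 2) 1 / |z| ^ (1 + α) ≤ z ^ 2 / |z| ^ (1 + α) := by
          gcongr; exact min_le_left _ _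
      _ ≤ 1 := hsq
      _ ≤ (2 / (1 + |z|)) ^ (1 + α) :=
          one_le_rpow (by rw [le_div_iff₀ (by positivity)]; linarith) (by linarith)
  · calc min (z ^ 2) 1 / |z| ^ (1 + α) ≤ 1 / |z| ^ (1 + α) := by
          gcongr; exact min_le_right _ _
      _ = (1 / |z|) ^ (1 + α) := by rw [div_rpow zero_le_one (abs_nonneg z), one_rpow]
      _ ≤ (2 / (1 + |z|)) ^ (1 + α) := by
          refine rpow_le_rpow (by positivity) ?_ (by linarith)
          rw [div_le_div_iff₀ (by linarith) (by linarith)]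
          linarith

theorem integrable_dissip_integrand {α : ℝ} (hα₀ : 0 < α) (hα₁ : α ≤ 1) {g : ℝ → ℝ} {K : ℝ≥0}
    {M : ℝ} (hg : LipschitzWith K g) (hM : ∀ y, |g y| ≤ M) (x : ℝ) :
    Integrable (fun z => (g x - g (x + z)) ^ 2 / |z| ^ (1 + α)) := by
  set C := max ((K : ℝ) ^ 2) (4 * M ^ 2)
  have hC : 0 ≤ C := le_max_of_le_left (sq_nonneg _)
  have hdom : Integrable (fun z : ℝ => C * 2 ^ (1 + α) * (1 + ‖z‖) ^ (-(1 + α))) :=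
    (integrable_one_add_norm (by simp; linarith)).const_mul _
  have hgm := hg.continuous.measurable
  refine hdom.mono' (by fun_prop : Measurable _).aestronglyMeasurable
    (Filter.Eventually.of_forall fun z => ?_)
  have hnum : (g x - g (x + z)) ^ 2 ≤ C * min (z ^ 2) 1 := by
    rw [mul_min_of_nonneg _ _ hC, mul_one]
    refine le_min ?_ ?_
    · have h : |g x - g (x + z)| ≤ K * |z| := by
        simpa [Real.dist_eq] using hg.dist_le_mul x (x + z)
      calc (g x - g (x + z)) ^ 2 ≤ (K * |z|) ^ 2 := by
            rw [← sq_abs]; gcongr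
        _ = K ^ 2 * z ^ 2 := by rw [mul_pow, sq_abs]
        _ ≤ C * z ^ 2 := by gcongr; exact le_max_left _ _
    · have h : |g x - g (x + z)| ≤ 2 * M := (abs_sub _ _).trans (by linarith [hM x, hM (x + z)])
      calc (g x - g (x + z)) ^ 2 ≤ (2 * M) ^ 2 := by
            rw [← sq_abs]; gcongr
        _ ≤ C := by rw [mul_pow]; norm_num; exact le_max_right _ _
  rw [norm_of_nonneg (by positivity)]
  calc (g x - g (x + z)) ^ 2 / |z| ^ (1 + α) ≤ C * (min (z ^ 2) 1 / |z| ^ (1 + α)) := by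
        rw [← mul_div_assoc]; gcongr
    _ ≤ C * (2 / (1 + |z|)) ^ (1 + α) := by
        gcongr; exact min_sq_one_div_rpow_le (by linarith) hα₁ z
    _ = C * 2 ^ (1 + α) * (1 + ‖z‖) ^ (-(1 + α)) := by
        rw [div_rpow zero_le_two (by positivity), rpow_neg (by positivity), Real.norm_eq_abs]
        ring

theorem sub_mul_sq_sub_le_integral_sq_sub_deriv {u : ℝ → ℝ} (hu : ContDiff ℝ 1 u) {a b : ℝ}
    (hab : a ≤ b) (A : ℝ) :
    (b - a) * A ^ 2 - 2 * A * (u b - u a) ≤ ∫ y in a..b, (A - deriv u y) ^ 2 := by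
  have hu' := hu.continuous_deriv le_rfl
  have hftc : ∫ y in a..b, deriv u y = u b - u a :=
    intervalIntegral.integral_deriv_eq_sub (fun y _ => hu.differentiable one_ne_zero y)
      (hu'.intervalIntegrable a b)
  calc (b - a) * A ^ 2 - 2 * A * (u b - u a) = ∫ y in a..b, (A ^ 2 - 2 * A * deriv u y) := by
        rw [intervalIntegral.integral_sub intervalIntegrable_const
          ((hu'.intervalIntegrable a b).const_mul _), intervalIntegral.integral_const_mul, hftc,
          intervalIntegral.integral_const, smul_eq_mul]
    _ ≤ ∫ y in a..b, (A - deriv u y) ^ 2 := by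
        refine intervalIntegral.integral_mono_on hab
          ((Continuous.intervalIntegrable (by fun_prop) a b))
          ((Continuous.intervalIntegrable (by fun_prop) a b)) fun y _ => ?_
        nlinarith [sq_nonneg (deriv u y)]

theorem integral_sq_sub_div_rpow_le_dissip {α : ℝ} (hα : -1 ≤ α) {g : ℝ → ℝ} (hg : Continuous g)
    {x r : ℝ} (hr : 0 < r) (hint : Integrable fun z => (g x - g (x + z)) ^ 2 / |z| ^ (1 + α)) :
    (∫ z in r..2 * r, (g x - g (x + z)) ^ 2) / (2 * r) ^ (1 + α) ≤ dissip α g x := by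
  rw [← intervalIntegral.integral_div, intervalIntegral.integral_of_le (by linarith)]
  calc ∫ z in Set.Ioc r (2 * r), (g x - g (x + z)) ^ 2 / (2 * r) ^ (1 + α)
      ≤ ∫ z in Set.Ioc r (2 * r), (g x - g (x + z)) ^ 2 / |z| ^ (1 + α) := by
        refine setIntegral_mono_on (Continuous.integrableOn_Ioc (by fun_prop)) hint.integrableOn
          measurableSet_Ioc fun z ⟨hrz, hz2r⟩ => ?_
        have hz : 0 < z := hr.trans hrz
        rw [abs_of_pos hz]
        exact div_le_div_of_nonneg_left (sq_nonneg _) (by positivity)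
          (rpow_le_rpow hz.le hz2r (by linarith))
    _ ≤ dissip α g x :=
        setIntegral_le_integral hint (Filter.Eventually.of_forall fun z => by positivity)

theorem div_rpow_le_dissip_deriv {α : ℝ} (hα : -1 ≤ α) {u : ℝ → ℝ} (hu : ContDiff ℝ 1 u) {V : ℝ}
    (hV : ∀ a b, |u b - u a| ≤ V) {x r : ℝ} (hr : 0 < r)
    (hint : Integrable fun z => (deriv u x - deriv u (x + z)) ^ 2 / |z| ^ (1 + α)) :
    (r * deriv u x ^ 2 - 2 * (|deriv u x| * V)) / (2 * r) ^ (1 + α) ≤ dissip α (deriv u) x := by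
  refine le_trans ?_ (integral_sq_sub_div_rpow_le_dissip hα (hu.continuous_deriv le_rfl) hr hint)
  gcongr
  set A := deriv u x
  have hosc : A * (u (x + 2 * r) - u (x + r)) ≤ |A| * V :=
    (le_abs_self _).trans ((abs_mul _ _).trans_le (by gcongr; exact hV _ _))
  rw [intervalIntegral.integral_comp_add_left (fun y => (A - deriv u y) ^ 2) x]
  calc r * A ^ 2 - 2 * (|A| * V)
      ≤ (x + 2 * r - (x + r)) * A ^ 2 - 2 * A * (u (x + 2 * r) - u (x + r)) := by linarith
    _ ≤ _ := sub_mul_sq_sub_le_integral_sq_sub_deriv hu (by linarith) A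

theorem exists_radius_le_div_rpow {α B : ℝ} (hα : 0 < α) (hB : 0 < B) (A V : ℝ) :
    ∃ r > 0, B * A ^ 2 - 16 * 4 ^ (2 / α) * B ^ ((2 + α) / α) * V ^ 2
      ≤ (r * A ^ 2 - 2 * (|A| * V)) / (2 * r) ^ (1 + α) := by
  set t := (4 * B) ^ α⁻¹
  have ht : 0 < t := by positivity
  have htα : t ^ α = 4 * B := rpow_inv_rpow (by positivity) hα.ne'
  have hden : (2 * (1 / (2 * t))) ^ (1 + α) = (4 * B * t)⁻¹ := by
    rw [show 2 * (1 / (2 * t)) = t⁻¹ by field_simp, inv_rpow ht.le, rpow_add ht, rpow_one, htα,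
      mul_comm]
  have hc : 16 * 4 ^ (2 / α) * B ^ ((2 + α) / α) = 16 * B * t ^ 2 := by
    rw [show (2 + α) / α = 1 + 2 / α by field_simp; ring, rpow_add hB, rpow_one,
      ← rpow_two, ← rpow_mul (by positivity), mul_rpow (by norm_num) hB.le]
    field_simp
  refine ⟨1 / (2 * t), by positivity, ?_⟩
  rw [hden, hc, div_inv_eq_mul]
  field_simp
  nlinarith [sq_nonneg (|A| - 4 * t * V), sq_abs A]

/-- second form of the nonlinear maximum principle:
`D_α u'(x) ≥ B |u'(x)|² - c₂ B^{(2+α)/α} V²`, with `c₂` depending only on `α`. -/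
theorem nonlinear_max_principle_B
    (α : ℝ) (hα₀ : 0 < α) (hα₁ : α < 1) :
    ∃ c₂ : ℝ, 0 < c₂ ∧
      ∀ (u : ℝ → ℝ) (V : ℝ),
        ContDiff ℝ 2 u → Function.Periodic u (2 * π) →
        V = sSup (Set.range u) - sInf (Set.range u) →
        ∀ (B : ℝ), 0 < B → ∀ x : ℝ,
          B * (deriv u x) ^ 2 - c₂ * B ^ ((2 + α) / α) * V ^ 2 ≤ dissip α (deriv u) x := by
  refine ⟨16 * 4 ^ (2 / α), by positivity, fun u V hu hper hV B hB x => ?_⟩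
  have h2π : 2 * π ≠ 0 := by positivity
  have hu₁ : ContDiff ℝ 1 u := hu.of_le one_le_two
  have hu' : ContDiff ℝ 1 (deriv u) := ContDiff.deriv' (n := 1) hu
  obtain ⟨K, hK⟩ := hper.deriv.exists_lipschitzWith h2π hu'
  obtain ⟨M, hM⟩ := isBounded_iff_forall_norm_le.1
    (hper.deriv.isBounded_of_continuous h2π hu'.continuous)
  have hint := integrable_dissip_integrand hα₀ hα₁.le hK (fun y => hM _ ⟨y, rfl⟩) x
  have hosc : ∀ a b, |u b - u a| ≤ V :=
    hV ▸ hper.abs_sub_le_sSup_sub_sInf h2π hu.continuous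
  obtain ⟨r, hr, hBr⟩ := exists_radius_le_div_rpow hα₀ hB (deriv u x) V
  exact hBr.trans (div_rpow_le_dissip_deriv (by linarith) hu₁ hosc hr hint)
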